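/- Let F(x) = ₂F₁(a,b;c;x) with a,b,c > 0 and a+b ≥ c. Then t ↦ F(1−e^{−t}) is convex on (0,∞); in particular F(1−√((1−x)(1−y))) ≤ (F(x)+F(y))/2 for all x,y ∈ (0,1), with equality iff x = y. -/

import Mathlib

/-- The rising factorial (Pochhammer symbol) `(a)ₙ = a(a+1)⋯(a+n−1)`. -/
def ascFac (a : ℝ) : ℕ → ℝ
  | 0 => 1
  | n + 1 => ascFac a n * (a + n)

/-- The Gaussian hypergeometric function `₂F₁(a,b;c;x) = Σ (a)ₙ(b)ₙ/((c)ₙ n!) xⁿ`. -/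
noncomputable def hyperF (a b c x : ℝ) : ℝ :=
  ∑' n : ℕ, ascFac a n * ascFac b n / (ascFac c n * n.factorial) * x ^ n


/-!
With `x = 1 - e^{-t}` one has `dx/dt = 1 - x`, so the derivative of `t ↦ F(1 - e^{-t})` is
`(1 - x) F'(x)`. Multiplying the series of `F'` by `1 - x` gives the power series with coefficients
`(n + 1) Tₙ₊₁ - n Tₙ = Tₙ (ab + (a + b - c) n) / (c + n)`, where `Tₙ` are the coefficients of `F`;
these are nonnegative when `a + b ≥ c` and positive for `n = 1`. Hence the derivative is strictly
increasing in `t` and the function is strictly convex. The two-point inequality is midpoint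
convexity at `s = -log(1 - x)`, `t = -log(1 - y)`, since `e^{-(s+t)/2} = √((1 - x)(1 - y))`.
-/

open Filter Topology Set Real

structure PosCoeffRatioOne (f : ℕ → ℝ) : Prop where
  pos : ∀ n, 0 < f n
  tendsto_ratio : Tendsto (fun n => f (n + 1) / f n) atTop (𝓝 1)

def derivCoeff (f : ℕ → ℝ) (n : ℕ) : ℝ := (n + 1) * f (n + 1)

namespace PosCoeffRatioOne

variable {f : ℕ → ℝ}

theorem summable_mul_pow (hf : PosCoeffRatioOne f) {x : ℝ} (hx : |x| < 1) :
    Summable (fun n => f n * x ^ n) := by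
  obtain ⟨r, hxr, hr1⟩ := exists_between hx
  have hr0 : 0 < r := (abs_nonneg x).trans_lt hxr
  have hsum : Summable (fun n => f n * r ^ n) := by
    have hlim := hf.tendsto_ratio.mul_const r
    rw [one_mul] at hlim
    refine summable_of_ratio_test_tendsto_lt_one hr1
      (.of_forall fun n => (mul_pos (hf.pos n) (pow_pos hr0 n)).ne') (hlim.congr fun n => ?_)
    have := hf.pos n
    have := hf.pos (n + 1)
    rw [Real.norm_of_nonneg (by positivity), Real.norm_of_nonneg (by positivity)]
    field_simp
    ring
  refine hsum.of_norm_bounded fun n => ?_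
  rw [norm_mul, Real.norm_of_nonneg (hf.pos n).le, norm_pow, Real.norm_eq_abs]
  gcongr
  exact (hf.pos n).le

theorem derivCoeff (hf : PosCoeffRatioOne f) : PosCoeffRatioOne (derivCoeff f) where
  pos n := mul_pos (by positivity) (hf.pos (n + 1))
  tendsto_ratio := by
    have hn : Tendsto (fun n : ℕ => (2 + 1 * (n : ℝ)) / (1 + 1 * n)) atTop (𝓝 (1 / 1)) :=
      tendsto_add_mul_div_add_mul_atTop_nhds 2 1 1 one_ne_zero
    rw [div_one] at hn
    have := hn.mul (hf.tendsto_ratio.comp (tendsto_add_atTop_nat 1))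
    rw [one_mul] at this
    refine this.congr fun n => ?_
    have := hf.pos (n + 1)
    simp only [Function.comp_apply, _root_.derivCoeff]
    push_cast
    field_simp
    ring

theorem hasDerivAt_tsum (hf : PosCoeffRatioOne f) {y : ℝ} (hy : |y| < 1) :
    HasDerivAt (fun x => ∑' n, f n * x ^ n) (∑' n, _root_.derivCoeff f n * y ^ n) y := by
  obtain ⟨r, hyr, hr1⟩ := exists_between hy
  have hr0 : 0 < r := (abs_nonneg y).trans_lt hyr
  have hshift : ∀ z : ℝ, (fun n => f (n + 1) * ((n + 1 : ℕ) * z ^ (n + 1 - 1))) =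
      fun n => _root_.derivCoeff f n * z ^ n := fun z => by
    ext n
    simp only [_root_.derivCoeff, Nat.add_sub_cancel]
    push_cast
    ring
  have hu : Summable fun n => f n * (n * r ^ (n - 1)) := by
    rw [← summable_nat_add_iff 1, hshift]
    exact hf.derivCoeff.summable_mul_pow (by rwa [abs_of_pos hr0])
  have hbound : ∀ n, ∀ z ∈ Ioo (-r) r, ‖f n * (n * z ^ (n - 1))‖ ≤ f n * (n * r ^ (n - 1)) := by
    intro n z hz
    rw [norm_mul, norm_mul, Real.norm_of_nonneg (hf.pos n).le, Real.norm_natCast, norm_pow,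
      Real.norm_eq_abs]
    have := hf.pos n
    gcongr
    exact abs_le.2 ⟨hz.1.le, hz.2.le⟩
  have hderiv := hasDerivAt_tsum_of_isPreconnected hu isOpen_Ioo isPreconnected_Ioo
    (fun n z _ => (hasDerivAt_pow n z).const_mul (f n)) hbound
    (y₀ := 0) (by simp; linarith) (hf.summable_mul_pow (by simp)) (abs_lt.1 hyr)
  have hval : ∑' n, f n * (n * y ^ (n - 1)) = ∑' n, _root_.derivCoeff f n * y ^ n := by
    rw [tsum_eq_zero_add' (by rw [hshift]; exact hf.derivCoeff.summable_mul_pow hy), hshift]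
    simp
  exact hval ▸ hderiv

end PosCoeffRatioOne

theorem tsum_derivCoeff_mul_one_sub {f : ℕ → ℝ} {x : ℝ}
    (hs : Summable (fun n => derivCoeff f n * x ^ n)) :
    (∑' n, derivCoeff f n * x ^ n) * (1 - x) = ∑' n, (derivCoeff f n - n * f n) * x ^ n := by
  have hshift : Summable fun n : ℕ => (n : ℝ) * f n * x ^ n := by
    rw [← summable_nat_add_iff 1]
    refine (hs.mul_left x).congr fun n => ?_
    simp only [derivCoeff]
    push_cast
    ring
  have hmul_x : (∑' n, derivCoeff f n * x ^ n) * x = ∑' n : ℕ, (n : ℝ) * f n * x ^ n := by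
    rw [tsum_eq_zero_add' ((summable_nat_add_iff 1).2 hshift), ← tsum_mul_right]
    simp only [derivCoeff]
    push_cast
    simp only [zero_mul, zero_add]
    exact tsum_congr fun n => by ring
  rw [mul_one_sub, hmul_x, ← hs.tsum_sub hshift]
  exact tsum_congr fun n => by ring

theorem strictMonoOn_tsum_mul_pow {g : ℕ → ℝ} {k : ℕ} {s : Set ℝ} (hg : ∀ n, 0 ≤ g n)
    (hk : k ≠ 0) (hgk : 0 < g k) (hs : s ⊆ Ici 0)
    (hsum : ∀ x ∈ s, Summable fun n => g n * x ^ n) :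
    StrictMonoOn (fun x => ∑' n, g n * x ^ n) s := by
  intro x hx y hy hxy
  refine Summable.tsum_lt_tsum_of_nonneg (i := k)
    (fun n => mul_nonneg (hg n) (pow_nonneg (hs hx) n)) (fun n => ?_) ?_ (hsum y hy)
  · exact mul_le_mul_of_nonneg_left (pow_le_pow_left₀ (hs hx) hxy.le n) (hg n)
  · exact mul_lt_mul_of_pos_left (pow_lt_pow_left₀ hxy (hs hx) hk) hgk

theorem StrictConvexOn.map_add_div_two_le_and_eq_iff {s : Set ℝ} {φ : ℝ → ℝ}
    (hφ : StrictConvexOn ℝ s φ) {u v : ℝ} (hu : u ∈ s) (hv : v ∈ s) :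
    φ ((u + v) / 2) ≤ (φ u + φ v) / 2 ∧ (φ ((u + v) / 2) = (φ u + φ v) / 2 ↔ u = v) := by
  have hmid : (u + v) / 2 = (1 / 2 : ℝ) • u + (1 / 2 : ℝ) • v := by
    simp only [smul_eq_mul]; ring
  have hval : (φ u + φ v) / 2 = (1 / 2 : ℝ) • φ u + (1 / 2 : ℝ) • φ v := by
    simp only [smul_eq_mul]; ring
  rw [hmid, hval]
  refine ⟨hφ.convexOn.2 hu hv (by norm_num) (by norm_num) (by norm_num), fun heq => ?_, ?_⟩
  · by_contra huv
    exact (hφ.2 hu hv huv (by norm_num) (by norm_num) (by norm_num)).ne heq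
  · rintro rfl
    simp only [← add_smul]
    norm_num

theorem one_sub_exp_neg_mem_Ioo {t : ℝ} (ht : 0 < t) : 1 - exp (-t) ∈ Ioo 0 1 :=
  ⟨sub_pos.2 (exp_lt_one_iff.2 (neg_lt_zero.2 ht)), sub_lt_self 1 (exp_pos _)⟩

theorem exists_one_sub_exp_neg_eq {x : ℝ} (hx : x ∈ Ioo 0 1) : ∃ t > 0, 1 - exp (-t) = x :=
  ⟨-log (1 - x), neg_pos.2 (log_neg (by linarith [hx.2]) (by linarith [hx.1])),
    by rw [neg_neg, exp_log (by linarith [hx.2])]; ring⟩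

theorem ascFac_pos {a : ℝ} (ha : 0 < a) : ∀ n, 0 < ascFac a n
  | 0 => one_pos
  | n + 1 => mul_pos (ascFac_pos ha n) (by positivity)

namespace HyperF

variable {a b c : ℝ}

noncomputable def coeff (a b c : ℝ) (n : ℕ) : ℝ :=
  ascFac a n * ascFac b n / (ascFac c n * n.factorial)

theorem coeff_succ (n : ℕ) :
    coeff a b c (n + 1) = coeff a b c n * ((a + n) * (b + n) / ((c + n) * (n + 1))) := by
  simp only [coeff, ascFac, Nat.factorial_succ, Nat.cast_mul, div_mul_div_comm]
  push_cast
  congr 1 <;> ring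

theorem coeff_pos (ha : 0 < a) (hb : 0 < b) (hc : 0 < c) (n : ℕ) : 0 < coeff a b c n := by
  have := ascFac_pos ha n
  have := ascFac_pos hb n
  have := ascFac_pos hc n
  unfold coeff
  positivity

theorem posCoeffRatioOne_coeff (ha : 0 < a) (hb : 0 < b) (hc : 0 < c) :
    PosCoeffRatioOne (coeff a b c) where
  pos := coeff_pos ha hb hc
  tendsto_ratio := by
    have hac : Tendsto (fun n : ℕ => (a + 1 * (n : ℝ)) / (c + 1 * n)) atTop (𝓝 (1 / 1)) :=
      tendsto_add_mul_div_add_mul_atTop_nhds a c 1 one_ne_zero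
    have hb1 : Tendsto (fun n : ℕ => (b + 1 * (n : ℝ)) / (1 + 1 * n)) atTop (𝓝 (1 / 1)) :=
      tendsto_add_mul_div_add_mul_atTop_nhds b 1 1 one_ne_zero
    have := hac.mul hb1
    rw [div_one, one_mul] at this
    refine this.congr fun n => ?_
    rw [coeff_succ, mul_div_cancel_left₀ _ (coeff_pos ha hb hc n).ne']
    simp only [one_mul, div_mul_div_comm]
    ring

theorem derivCoeff_coeff_sub (hc : 0 < c) (n : ℕ) :
    derivCoeff (coeff a b c) n - n * coeff a b c n =
      coeff a b c n * ((a * b + (a + b - c) * n) / (c + n)) := by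
  have : c + (n : ℝ) ≠ 0 := by positivity
  rw [derivCoeff, coeff_succ]
  field_simp
  ring

theorem derivCoeff_coeff_sub_nonneg (ha : 0 < a) (hb : 0 < b) (hc : 0 < c) (h : c ≤ a + b)
    (n : ℕ) : 0 ≤ derivCoeff (coeff a b c) n - n * coeff a b c n := by
  rw [derivCoeff_coeff_sub hc]
  have := coeff_pos ha hb hc n
  have : 0 ≤ (a + b - c) * n := mul_nonneg (by linarith) n.cast_nonneg
  positivity

theorem derivCoeff_coeff_sub_one_pos (ha : 0 < a) (hb : 0 < b) (hc : 0 < c) (h : c ≤ a + b) :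
    0 < derivCoeff (coeff a b c) 1 - (1 : ℕ) * coeff a b c 1 := by
  rw [derivCoeff_coeff_sub hc]
  have := coeff_pos ha hb hc 1
  have : 0 ≤ (a + b - c) * (1 : ℕ) := by rw [Nat.cast_one, mul_one]; linarith
  positivity

theorem hasDerivAt (ha : 0 < a) (hb : 0 < b) (hc : 0 < c) {x : ℝ} (hx : |x| < 1) :
    HasDerivAt (hyperF a b c) (∑' n, derivCoeff (coeff a b c) n * x ^ n) x :=
  (posCoeffRatioOne_coeff ha hb hc).hasDerivAt_tsum hx

theorem hasDerivAt_one_sub_exp_neg (ha : 0 < a) (hb : 0 < b) (hc : 0 < c) {t : ℝ} (ht : 0 < t) :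
    HasDerivAt (fun t => hyperF a b c (1 - exp (-t)))
      (∑' n, (derivCoeff (coeff a b c) n - n * coeff a b c n) * (1 - exp (-t)) ^ n) t := by
  have hx : |1 - exp (-t)| < 1 := by
    rw [abs_of_pos (one_sub_exp_neg_mem_Ioo ht).1]
    exact (one_sub_exp_neg_mem_Ioo ht).2
  have hinner : HasDerivAt (fun t => 1 - exp (-t)) (1 - (1 - exp (-t))) t := by
    simpa using ((hasDerivAt_neg t).exp).const_sub 1
  rw [← tsum_derivCoeff_mul_one_sub
    ((posCoeffRatioOne_coeff ha hb hc).derivCoeff.summable_mul_pow hx)]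
  exact (hasDerivAt ha hb hc hx).comp t hinner

theorem strictMonoOn_tsum_derivCoeff_coeff_sub (ha : 0 < a) (hb : 0 < b) (hc : 0 < c)
    (h : c ≤ a + b) :
    StrictMonoOn (fun x => ∑' n, (derivCoeff (coeff a b c) n - n * coeff a b c n) * x ^ n)
      (Ioo 0 1) := by
  refine strictMonoOn_tsum_mul_pow (derivCoeff_coeff_sub_nonneg ha hb hc h) one_ne_zero
    (derivCoeff_coeff_sub_one_pos ha hb hc h) (Ioo_subset_Ioi_self.trans Ioi_subset_Ici_self)
    fun x hx => ?_
  have hsum := (posCoeffRatioOne_coeff ha hb hc).derivCoeff.summable_mul_pow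
    (x := x) (by rw [abs_of_pos hx.1]; exact hx.2)
  refine hsum.of_nonneg_of_le
    (fun n => mul_nonneg (derivCoeff_coeff_sub_nonneg ha hb hc h n) (pow_pos hx.1 n).le)
    fun n => mul_le_mul_of_nonneg_right ?_ (pow_pos hx.1 n).le
  exact sub_le_self _ (mul_nonneg n.cast_nonneg (coeff_pos ha hb hc n).le)

theorem strictConvexOn_one_sub_exp_neg (ha : 0 < a) (hb : 0 < b) (hc : 0 < c) (h : c ≤ a + b) :
    StrictConvexOn ℝ (Ioi 0) (fun t => hyperF a b c (1 - exp (-t))) := by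
  refine StrictMonoOn.strictConvexOn_of_deriv (convex_Ioi 0)
    (fun t ht => (hasDerivAt_one_sub_exp_neg ha hb hc ht).continuousAt.continuousWithinAt) ?_
  rw [interior_Ioi]
  intro s hs t ht hst
  simp only [(hasDerivAt_one_sub_exp_neg ha hb hc (mem_Ioi.1 hs)).deriv,
    (hasDerivAt_one_sub_exp_neg ha hb hc (mem_Ioi.1 ht)).deriv]
  refine strictMonoOn_tsum_derivCoeff_coeff_sub ha hb hc h (one_sub_exp_neg_mem_Ioo hs)
    (one_sub_exp_neg_mem_Ioo ht) ?_
  simpa using hst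

end HyperF

theorem stmt12 (a b c : ℝ) (ha : 0 < a) (hb : 0 < b) (hc : 0 < c)
    (h : a + b ≥ c) :
    ConvexOn ℝ (Set.Ioi 0) (fun t => hyperF a b c (1 - Real.exp (-t))) ∧
      ∀ x ∈ Set.Ioo (0:ℝ) 1, ∀ y ∈ Set.Ioo (0:ℝ) 1,
        hyperF a b c (1 - Real.sqrt ((1 - x) * (1 - y))) ≤
            (hyperF a b c x + hyperF a b c y) / 2 ∧
          (hyperF a b c (1 - Real.sqrt ((1 - x) * (1 - y))) =
              (hyperF a b c x + hyperF a b c y) / 2 ↔ x = y) := by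
  have hconv := HyperF.strictConvexOn_one_sub_exp_neg ha hb hc h
  refine ⟨hconv.convexOn, fun _ hx _ hy => ?_⟩
  obtain ⟨s, hs, rfl⟩ := exists_one_sub_exp_neg_eq hx
  obtain ⟨t, ht, rfl⟩ := exists_one_sub_exp_neg_eq hy
  have hsqrt : √((1 - (1 - exp (-s))) * (1 - (1 - exp (-t)))) = exp (-((s + t) / 2)) := by
    rw [sub_sub_cancel, sub_sub_cancel, ← exp_add, ← exp_half]
    ring_nf
  have hinj : 1 - exp (-s) = 1 - exp (-t) ↔ s = t := by simp
  rw [hsqrt, hinj]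
  exact hconv.map_add_div_two_le_and_eq_iff hs ht
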